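/- arXiv:2604.19704 — 2 statements merged into one kernel-verified Lean document; each statement's English description precedes it below -/
import Mathlib

section
/- Let F ⊆ ℝ be closed and suppose there exists a continuous function f : ℝ → ℝ with 𝕃ip f = χ_F. Then F is quasi-dense: for every x ∈ F and every open neighborhood U of x, ℓ(F ∩ U) > 0. -/
open scoped Classical
open Filter Metric Topology MeasureTheory Set ENNReal

/-- The local Lipschitz derivative. -/
noncomputable def LLip {X Y : Type*} [MetricSpace X] [MetricSpace Y] (f : X → Y) (x : X) : ℝ≥0∞ :=
  ⨅ (r : ℝ) (_ : 0 < r), ⨆ (u : X) (_ : u ∈ ball x r) (v : X) (_ : v ∈ ball x r) (_ : u ≠ v),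
    ENNReal.ofReal (dist (f u) (f v) / dist u v)

/-! If `F ∩ U` were null, `f` would map a ball `B ⊆ U` around `x ∈ F` onto a null set. Indeed `f`
is locally Lipschitz since `𝕃ip f ≤ 1`, so it maps the null set `B ∩ F` to a null set, while on
`B \ F` we have `𝕃ip f = 0`, hence `f' = 0`, and Sard's lemma makes `f (B \ F)` null. A connected
null subset of `ℝ` is a point, so `f` is constant near `x` and `𝕃ip f x = 0`, contradicting
`x ∈ F`. -/

section MetricSpace

variable {X Y : Type*} [MetricSpace X] [MetricSpace Y] {f : X → Y} {x : X}

lemma exists_lipschitzOnWith_ball_of_LLip_lt {K : NNReal} (h : LLip f x < K) :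
    ∃ r > 0, LipschitzOnWith K f (ball x r) := by
  rw [LLip] at h
  simp only [iInf_lt_iff] at h
  obtain ⟨r, hr, hsup⟩ := h
  refine ⟨r, hr, LipschitzOnWith.of_dist_le_mul fun u hu v hv => ?_⟩
  rcases eq_or_ne u v with rfl | huv
  · simp
  have hlt : ENNReal.ofReal (dist (f u) (f v) / dist u v) < ENNReal.ofReal K := by
    rw [ENNReal.ofReal_coe_nnreal]
    exact (le_iSup₂_of_le u hu <| le_iSup₂_of_le v hv <| le_iSup (fun _ => _) huv).trans_lt hsup
  rw [ENNReal.ofReal_lt_ofReal_iff_of_nonneg (by positivity), div_lt_iff₀ (dist_pos.mpr huv)]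
    at hlt
  exact hlt.le

lemma LLip_eq_zero_of_eventually_eq {c : Y} (h : ∀ᶠ y in 𝓝 x, f y = c) : LLip f x = 0 := by
  obtain ⟨r, hr, hball⟩ := Metric.eventually_nhds_iff_ball.mp h
  refine le_antisymm ((iInf₂_le r hr).trans (iSup₂_le fun u hu => iSup₂_le fun v hv =>
    iSup_le fun _ => ?_)) bot_le
  simp [hball u hu, hball v hv]

lemma locallyLipschitz_of_LLip_lt_top (h : ∀ x, LLip f x < ⊤) : LocallyLipschitz f := by
  intro x
  obtain ⟨K, hK, -⟩ := ENNReal.lt_iff_exists_nnreal_btwn.mp (h x)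
  obtain ⟨r, hr, hlip⟩ := exists_lipschitzOnWith_ball_of_LLip_lt hK
  exact ⟨K, ball x r, ball_mem_nhds x hr, hlip⟩

end MetricSpace

lemma hasFDerivAt_zero_of_LLip_eq_zero {E F : Type*} [NormedAddCommGroup E] [NormedSpace ℝ E]
    [NormedAddCommGroup F] [NormedSpace ℝ F] {f : E → F} {x : E} (h : LLip f x = 0) :
    HasFDerivAt f (0 : E →L[ℝ] F) x := by
  refine HasFDerivAt.of_isLittleO (Asymptotics.isLittleO_iff.mpr fun c hc => ?_)
  have hK : LLip f x < c.toNNReal := by simpa [h] using hc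
  obtain ⟨r, hr, hlip⟩ := exists_lipschitzOnWith_ball_of_LLip_lt hK
  filter_upwards [ball_mem_nhds x hr] with y hy
  simpa [dist_eq_norm, hc.le] using hlip.dist_le_mul y hy x (mem_ball_self hr)

theorem LocallyLipschitzOn.hausdorffMeasure_image_null {X Y : Type*} [EMetricSpace X]
    [EMetricSpace Y] [MeasurableSpace X] [BorelSpace X] [MeasurableSpace Y] [BorelSpace Y]
    [SecondCountableTopology X] {f : X → Y} {s : Set X} (hf : LocallyLipschitzOn s f) {d : ℝ}
    (hd : 0 ≤ d) (hs : μH[d] s = 0) : μH[d] (f '' s) = 0 := by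
  choose! K t ht hlip using fun x (hx : x ∈ s) => hf hx
  obtain ⟨c, hcs, hc, hcover⟩ := TopologicalSpace.countable_cover_nhdsWithin ht
  refine measure_mono_null (image_mono (subset_inter subset_rfl hcover)) ?_
  rw [inter_iUnion₂, image_iUnion₂]
  refine (measure_biUnion_null_iff hc).mpr fun y hy => le_antisymm ?_ bot_le
  calc μH[d] (f '' (s ∩ t y)) ≤ (K y : ℝ≥0∞) ^ d * μH[d] (s ∩ t y) :=
        ((hlip y (hcs hy)).mono inter_subset_right).hausdorffMeasure_image_le hd
    _ = 0 := by rw [measure_mono_null inter_subset_left hs, mul_zero]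

theorem addHaar_image_setOf_LLip_eq_zero {E : Type*} [NormedAddCommGroup E] [NormedSpace ℝ E]
    [FiniteDimensional ℝ E] [Nontrivial E] [MeasurableSpace E] [BorelSpace E] (μ : Measure E)
    [μ.IsAddHaarMeasure] (f : E → E) : μ (f '' {x | LLip f x = 0}) = 0 :=
  addHaar_image_eq_zero_of_det_fderivWithin_eq_zero μ
    (fun x hx => (hasFDerivAt_zero_of_LLip_eq_zero hx).hasFDerivWithinAt)
    (fun _ _ => by simp [ContinuousLinearMap.det])

lemma IsPreconnected.subsingleton_of_volume_eq_zero {s : Set ℝ} (hs : IsPreconnected s)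
    (h : volume s = 0) : s.Subsingleton := by
  intro a ha b hb
  by_contra hab
  rcases lt_or_gt_of_ne hab with hlt | hlt
  · have := measure_mono_null (hs.Icc_subset ha hb) h
    simp only [Real.volume_Icc, ENNReal.ofReal_eq_zero, tsub_le_iff_right, zero_add] at this
    linarith
  · have := measure_mono_null (hs.Icc_subset hb ha) h
    simp only [Real.volume_Icc, ENNReal.ofReal_eq_zero, tsub_le_iff_right, zero_add] at this
    linarith

theorem qDense_of_LLip_one_general (F : Set ℝ) (f : ℝ → ℝ)
    (h : ∀ x, LLip f x = (if x ∈ F then 1 else 0)) :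
    ∀ x ∈ F, ∀ U : Set ℝ, IsOpen U → x ∈ U → 0 < volume (F ∩ U) := by
  intro x hxF U hU hxU
  by_contra! hnull
  obtain ⟨r, hr, hrU⟩ := Metric.isOpen_iff.mp hU x hxU
  have hlip : LocallyLipschitz f := locallyLipschitz_of_LLip_lt_top fun y => by
    rw [h y]; split_ifs <;> simp
  have hF_null : volume (f '' (ball x r ∩ F)) = 0 := by
    rw [← hausdorffMeasure_real] at hnull ⊢
    refine hlip.locallyLipschitzOn.hausdorffMeasure_image_null zero_le_one ?_
    exact measure_mono_null (fun y hy => ⟨hy.2, hrU hy.1⟩ : ball x r ∩ F ⊆ F ∩ U)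
      (nonpos_iff_eq_zero.mp hnull)
  have hball_null : volume (f '' ball x r) = 0 := by
    refine measure_mono_null ?_
      (measure_union_null hF_null (addHaar_image_setOf_LLip_eq_zero volume f))
    rintro _ ⟨y, hy, rfl⟩
    by_cases hyF : y ∈ F
    · exact Or.inl (mem_image_of_mem f (show y ∈ ball x r ∩ F from ⟨hy, hyF⟩))
    · exact Or.inr (mem_image_of_mem f (by simp [h y, hyF]))
  have hconst : (f '' ball x r).Subsingleton :=
    (isPreconnected_ball.image f hlip.continuous.continuousOn).subsingleton_of_volume_eq_zero
      hball_null
  have hx0 : LLip f x = 0 := LLip_eq_zero_of_eventually_eq (c := f x) <|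
    Filter.eventually_of_mem (ball_mem_nhds x hr) fun y hy =>
      hconst (mem_image_of_mem f hy) (mem_image_of_mem f (mem_ball_self hr))
  simp [h x, hxF] at hx0

theorem qDense_of_LLip_one (F : Set ℝ) (hF : IsClosed F) (f : ℝ → ℝ) (hc : Continuous f)
    (h : ∀ x, LLip f x = (if x ∈ F then 1 else 0)) :
    ∀ x ∈ F, ∀ U : Set ℝ, IsOpen U → x ∈ U → 0 < volume (F ∩ U) :=
  qDense_of_LLip_one_general F f h
end

section
/- Every regular closed subset F of a separable normed space X (i.e., F equals the closure of its interior) is a local Lipschitz one set: there exists a continuous (indeed 1-Lipschitz) function f : X → ℝ with 𝕃ip f = χ_F. -/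
open scoped Classical
open Filter Metric Topology ENNReal

/-!
The witness is `f = infDist · S` for a closed set `S` with `closure Sᶜ = F`: take `S = (interior F)ᶜ`,
or any singleton if `F` is the whole space. Distance functions are `1`-Lipschitz and vanish on the
open set `X \ F = interior S`. At a point `p ∉ S`, walking from `p` towards an almost nearest point
of `S` decreases `infDist · S` at almost unit rate, so `𝕃ip f = 1` on `closure Sᶜ`.
-/

section LLip

variable {X Y : Type*} [MetricSpace X] [MetricSpace Y] {f : X → Y} {x : X}

lemma lLip_le_of_lipschitzWith {K : NNReal} (hf : LipschitzWith K f) (x : X) :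
    LLip f x ≤ K := by
  refine (iInf₂_le 1 one_pos).trans <| iSup₂_le fun u _ => iSup₂_le fun v _ => iSup_le fun huv => ?_
  rw [← ENNReal.ofReal_coe_nnreal]
  exact ENNReal.ofReal_le_ofReal <| (div_le_iff₀ (dist_pos.2 huv)).2 (hf.dist_le_mul u v)

lemma lLip_eq_zero_of_eventually_eq (h : ∀ᶠ y in 𝓝 x, f y = f x) : LLip f x = 0 := by
  obtain ⟨r, hr, hconst⟩ := Metric.eventually_nhds_iff_ball.1 h
  refine le_antisymm ((iInf₂_le r hr).trans ?_) zero_le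
  refine iSup₂_le fun u hu => iSup₂_le fun v hv => iSup_le fun _ => ?_
  simp [hconst u hu, hconst v hv]

lemma ofReal_le_lLip {a : ℝ} (h : ∀ r > 0, ∀ c < a, ∃ u ∈ ball x r, ∃ v ∈ ball x r,
    u ≠ v ∧ c ≤ dist (f u) (f v) / dist u v) : ENNReal.ofReal a ≤ LLip f x := by
  refine le_iInf₂ fun r hr => le_of_forall_lt_imp_le_of_dense fun b hb => ?_
  have hb_top : b ≠ ⊤ := (hb.trans ofReal_lt_top).ne
  obtain ⟨u, hu, v, hv, huv, hslope⟩ := h r hr b.toReal (toReal_lt_of_lt_ofReal hb)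
  rw [← ofReal_toReal hb_top]
  exact le_iSup₂_of_le u hu <| le_iSup₂_of_le v hv <| le_iSup_of_le huv <| ofReal_le_ofReal hslope

end LLip

section infDist

variable {E : Type*} [NormedAddCommGroup E] [NormedSpace ℝ E] {S : Set E}

lemma exists_dist_eq_mul_le_infDist_sub {p : E} {t c : ℝ} (ht : 0 < t) (htp : t ≤ infDist p S)
    (hc : c < 1) : ∃ v, dist p v = t ∧ c * t ≤ infDist p S - infDist v S := by
  have hS : S.Nonempty := Set.nonempty_iff_ne_empty.2 fun h => by
    rw [h, infDist_empty] at htp; linarith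
  obtain ⟨y, hyS, hpy⟩ := (infDist_lt_iff hS).1
    (show infDist p S < infDist p S + (1 - c) * t by nlinarith)
  have hD : t ≤ dist p y := htp.trans (infDist_le_dist_of_mem hyS)
  have hD0 : 0 < dist p y := ht.trans_le hD
  refine ⟨AffineMap.lineMap p y (t / dist p y), ?_, ?_⟩
  · rw [dist_left_lineMap, Real.norm_of_nonneg (by positivity), div_mul_cancel₀ _ hD0.ne']
  · have hvy : dist (AffineMap.lineMap p y (t / dist p y)) y = dist p y - t := by
      rw [dist_lineMap_right, Real.norm_of_nonneg (by rw [sub_nonneg, div_le_one hD0]; exact hD),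
        sub_mul, div_mul_cancel₀ _ hD0.ne', one_mul]
    have := hvy ▸ infDist_le_dist_of_mem (x := AffineMap.lineMap p y (t / dist p y)) hyS
    nlinarith

lemma one_le_lLip_infDist (hS : IsClosed S) (hne : S.Nonempty) {x : E} (hx : x ∈ closure Sᶜ) :
    1 ≤ LLip (infDist · S) x := by
  rw [← ENNReal.ofReal_one]
  refine ofReal_le_lLip fun r hr c hc => ?_
  obtain ⟨p, hpS, hxp⟩ := Metric.mem_closure_iff.1 hx (r / 2) (half_pos hr)
  have hd : 0 < infDist p S := (hS.notMem_iff_infDist_pos hne).1 hpS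
  set t := min (infDist p S) (r / 2)
  have ht : 0 < t := lt_min hd (half_pos hr)
  obtain ⟨v, hpv, hslope⟩ :=
    exists_dist_eq_mul_le_infDist_sub (S := S) ht (min_le_left _ _) hc
  refine ⟨p, ?_, v, ?_, fun hpv' => ht.ne (by rwa [hpv', dist_self] at hpv), ?_⟩
  · rw [mem_ball, dist_comm]; linarith
  · rw [mem_ball]
    linarith [dist_triangle v p x, dist_comm v p, dist_comm p x, min_le_right (infDist p S) (r / 2)]
  · rw [hpv, le_div_iff₀ ht, Real.dist_eq]
    exact hslope.trans (le_abs_self _)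

lemma lLip_infDist (hS : IsClosed S) (hne : S.Nonempty) (x : E) :
    LLip (infDist · S) x = if x ∈ closure Sᶜ then 1 else 0 := by
  split_ifs with hx
  · exact le_antisymm (by simpa using lLip_le_of_lipschitzWith (lipschitz_infDist_pt S) x)
      (one_le_lLip_infDist hS hne hx)
  · have hxS : x ∈ interior S := by rwa [interior_eq_compl_closure_compl]
    refine lLip_eq_zero_of_eventually_eq ?_
    filter_upwards [isOpen_interior.mem_nhds hxS] with y hy
    rw [infDist_zero_of_mem (interior_subset hy), infDist_zero_of_mem (interior_subset hxS)]

end infDist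

lemma exists_isClosed_nonempty_closure_compl_eq {X : Type*} [NormedAddCommGroup X]
    [NormedSpace ℝ X] [Nontrivial X] {F : Set X} (hF : F = closure (interior F)) :
    ∃ S : Set X, IsClosed S ∧ S.Nonempty ∧ closure Sᶜ = F := by
  rcases (interior F)ᶜ.eq_empty_or_nonempty with h | h
  · refine ⟨{0}, isClosed_singleton, Set.singleton_nonempty 0, ?_⟩
    rw [(dense_compl_singleton (0 : X)).closure_eq, hF, Set.compl_empty_iff.1 h, closure_univ]
  · exact ⟨_, isOpen_interior.isClosed_compl, h, by rw [compl_compl, ← hF]⟩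

theorem regularClosed_localLipschitzOne_general {X : Type*} [NormedAddCommGroup X]
    [NormedSpace ℝ X] [Nontrivial X]
    (F : Set X) (hF : F = closure (interior F)) :
    ∃ f : X → ℝ, LipschitzWith 1 f ∧ Continuous f ∧
      ∀ x, LLip f x = (if x ∈ F then 1 else 0) := by
  obtain ⟨S, hS, hne, rfl⟩ := exists_isClosed_nonempty_closure_compl_eq hF
  exact ⟨(infDist · S), lipschitz_infDist_pt S, (lipschitz_infDist_pt S).continuous,
    lLip_infDist hS hne⟩

theorem regularClosed_localLipschitzOne {X : Type*} [NormedAddCommGroup X]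
    [NormedSpace ℝ X] [Nontrivial X] [TopologicalSpace.SeparableSpace X]
    (F : Set X) (hF : F = closure (interior F)) :
    ∃ f : X → ℝ, LipschitzWith 1 f ∧ Continuous f ∧
      ∀ x, LLip f x = (if x ∈ F then 1 else 0) :=
  regularClosed_localLipschitzOne_general F hF
end
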